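/- arXiv:1905.04285 — 4 statements merged into one kernel-verified Lean document; each statement's English description precedes it below -/
import Mathlib

section
/- Let V be a vector space with basis {v_x : x ∈ X} indexed by a rack (X,▷), and let q : X × X → k^× be a 2-cocycle, i.e. q_{x, y▷z} q_{y,z} = q_{x▷y, x▷z} q_{x,z} for all x,y,z ∈ X. Then the linear map c : V ⊗ V → V ⊗ V defined by c(v_x ⊗ v_y) = q_{x,y} v_{x▷y} ⊗ v_x satisfies the braid equation (c⊗id)(id⊗c)(c⊗id) = (id⊗c)(c⊗id)(id⊗c). -/
/-- `c ⊗ id` on `V ⊗ V ⊗ V` for the rack braiding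
`c(v_x ⊗ v_y) = q x y • v_{x ▷ y} ⊗ v_x`, where `V ⊗ V ⊗ V` is identified with
`(X × X × X) →₀ k`. -/
noncomputable def braidOuter (k : Type*) [Field k] {X : Type*}
    (q : X → X → k) (op : X → X → X) :
    ((X × X × X) →₀ k) →ₗ[k] ((X × X × X) →₀ k) :=
  Finsupp.lsum k fun t =>
    LinearMap.toSpanSingleton k ((X × X × X) →₀ k)
      (q t.1 t.2.1 • Finsupp.single (op t.1 t.2.1, t.1, t.2.2) (1 : k))

/-- `id ⊗ c` on `V ⊗ V ⊗ V`. -/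
noncomputable def braidInner (k : Type*) [Field k] {X : Type*}
    (q : X → X → k) (op : X → X → X) :
    ((X × X × X) →₀ k) →ₗ[k] ((X × X × X) →₀ k) :=
  Finsupp.lsum k fun t =>
    LinearMap.toSpanSingleton k ((X × X × X) →₀ k)
      (q t.2.1 t.2.2 • Finsupp.single (t.1, op t.2.1 t.2.2, t.2.1) (1 : k))

/-!
On the basis vector `v_x ⊗ v_y ⊗ v_z` both sides of the braid equation produce a multiple of
`v_w ⊗ v_{x▷y} ⊗ v_x`: the left side with `w = (x▷y)▷(x▷z)` and scalar
`q_{x,y} q_{x,z} q_{x▷y,x▷z}`, the right side with `w = x▷(y▷z)` and scalar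
`q_{y,z} q_{x,y▷z} q_{x,y}`. Self-distributivity identifies the vectors and the cocycle condition
the scalars.
-/

section

variable {k : Type*} [Field k] {X : Type*} (q : X → X → k) (op : X → X → X)

theorem braidOuter_single (x y z : X) (a : k) :
    braidOuter k q op (Finsupp.single (x, y, z) a) =
      Finsupp.single (op x y, x, z) (a * q x y) := by
  simp [braidOuter]

theorem braidInner_single (x y z : X) (a : k) :
    braidInner k q op (Finsupp.single (x, y, z) a) =
      Finsupp.single (x, op y z, y) (a * q y z) := by
  simp [braidInner]

end

theorem rack_cocycle_braiding_general {k : Type*} [Field k] {X : Type*}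
    (q : X → X → k) (op : X → X → X)
    (hsd : ∀ x y z : X, op x (op y z) = op (op x y) (op x z))
    (hcoc : ∀ x y z : X, q x (op y z) * q y z = q (op x y) (op x z) * q x z) :
    (braidOuter k q op) ∘ₗ (braidInner k q op) ∘ₗ (braidOuter k q op)
      = (braidInner k q op) ∘ₗ (braidOuter k q op) ∘ₗ (braidInner k q op) := by
  refine Finsupp.lhom_ext ?_
  rintro ⟨x, y, z⟩ a
  simp only [LinearMap.comp_apply, braidOuter_single, braidInner_single]
  rw [hsd x y z]
  congr 1
  linear_combination (-(a * q x y)) * hcoc x y z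

/-- for a rack `(X, ▷)` and a 2-cocycle `q : X × X → kˣ`, the map
`c(v_x ⊗ v_y) = q_{x,y} v_{x▷y} ⊗ v_x` on the free vector space on `X`
satisfies the braid equation `(c⊗id)(id⊗c)(c⊗id) = (id⊗c)(c⊗id)(id⊗c)`. -/
theorem rack_cocycle_braiding {k : Type*} [Field k] {X : Type*}
    (q : X → X → k) (op : X → X → X)
    (hsd : ∀ x y z : X, op x (op y z) = op (op x y) (op x z))
    (hbij : ∀ x : X, Function.Bijective (op x))
    (hq : ∀ x y : X, q x y ≠ 0)
    (hcoc : ∀ x y z : X, q x (op y z) * q y z = q (op x y) (op x z) * q x z) :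
    (braidOuter k q op) ∘ₗ (braidInner k q op) ∘ₗ (braidOuter k q op)
      = (braidInner k q op) ∘ₗ (braidOuter k q op) ∘ₗ (braidInner k q op) :=
  rack_cocycle_braiding_general q op hsd hcoc
end

section
/- Let A be the associative k-algebra (char k = 0) presented by generators x₁, x₂, x₃ and relations x_i² = 0 (i=1,2,3), x₁x₂ + x₃x₁ + x₂x₃ = 0 and x₂x₁ + x₁x₃ + x₃x₂ = 0 (the Fomin–Kirillov algebra FK₃). Then dim_k A = 12, and the 12 monomials x₁^{n₁} x₂^{n₂} x₃^{n₃} (n_i ∈ {0,1}) together with x₁^{n₁} x₂x₁ x₃^{n₃} (n₁,n₃ ∈ {0,1}) form a basis of A. -/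
/-! Using `x₃x₁ = -x₁x₂ - x₂x₃` and `x₃x₂ = -x₂x₁ - x₁x₃` to move `x₃` to the right, together
with `xᵢ² = 0` and the braid relation `x₂x₁x₂ = x₁x₂x₁` (a consequence of the others), every word
in the generators reduces to a combination of the twelve monomials, so they span. For
independence, left multiplication on these twelve monomials is given by explicit integer
matrices which satisfy the defining relations; in the resulting representation the twelve
monomials act on the first basis vector by sending it to twelve distinct basis vectors. -/

/-- Defining relations of the Fomin–Kirillov algebra FK₃. -/
inductive FKRel (k : Type*) [Field k] :
    FreeAlgebra k (Fin 3) → FreeAlgebra k (Fin 3) → Prop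
  | sq (i : Fin 3) : FKRel k (FreeAlgebra.ι k i * FreeAlgebra.ι k i) 0
  | r1 : FKRel k
      (FreeAlgebra.ι k 0 * FreeAlgebra.ι k 1 + FreeAlgebra.ι k 2 * FreeAlgebra.ι k 0
        + FreeAlgebra.ι k 1 * FreeAlgebra.ι k 2) 0
  | r2 : FKRel k
      (FreeAlgebra.ι k 1 * FreeAlgebra.ι k 0 + FreeAlgebra.ι k 0 * FreeAlgebra.ι k 2
        + FreeAlgebra.ι k 2 * FreeAlgebra.ι k 1) 0

/-- The Fomin–Kirillov algebra FK₃, presented by generators `x₁, x₂, x₃`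
(indexed `0, 1, 2`) and relations `x_i² = 0`, `x₁x₂ + x₃x₁ + x₂x₃ = 0`,
`x₂x₁ + x₁x₃ + x₃x₂ = 0`. -/
abbrev FK3 (k : Type*) [Field k] := RingQuot (FKRel k)

/-- The generators of FK₃. -/
noncomputable def fkx (k : Type*) [Field k] (i : Fin 3) : FK3 k :=
  RingQuot.mkAlgHom k (FKRel k) (FreeAlgebra.ι k i)

structure IsFK3Triple {R : Type*} [Ring R] (a b c : R) : Prop where
  a_mul_a : a * a = 0
  b_mul_b : b * b = 0
  c_mul_c : c * c = 0
  rel₁ : a * b + c * a + b * c = 0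
  rel₂ : b * a + a * c + c * b = 0

def fkMonomial {M : Type*} [Monoid M] (a b c : M) :
    (Fin 2 × Fin 2 × Fin 2) ⊕ (Fin 2 × Fin 2) → M
  | .inl p => a ^ (p.1 : ℕ) * b ^ (p.2.1 : ℕ) * c ^ (p.2.2 : ℕ)
  | .inr p => a ^ (p.1 : ℕ) * (b * a) * c ^ (p.2 : ℕ)

theorem map_fkMonomial {M N F : Type*} [Monoid M] [Monoid N] [FunLike F M N]
    [MonoidHomClass F M N] (f : F) (a b c : M) (i : (Fin 2 × Fin 2 × Fin 2) ⊕ (Fin 2 × Fin 2)) :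
    f (fkMonomial a b c i) = fkMonomial (f a) (f b) (f c) i := by
  cases i <;> simp [fkMonomial]

namespace IsFK3Triple

variable {R : Type*} [Ring R] {a b c : R} (h : IsFK3Triple a b c)
include h

theorem map {S F : Type*} [Ring S] [FunLike F R S] [RingHomClass F R S] (f : F) :
    IsFK3Triple (f a) (f b) (f c) := by
  constructor <;>
    simp only [← map_mul, ← map_add, h.a_mul_a, h.b_mul_b, h.c_mul_c, h.rel₁, h.rel₂, map_zero]

theorem a_mul_a_mul (t : R) : a * (a * t) = 0 := by rw [← mul_assoc, h.a_mul_a, zero_mul]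

theorem b_mul_b_mul (t : R) : b * (b * t) = 0 := by rw [← mul_assoc, h.b_mul_b, zero_mul]

theorem c_mul_a : c * a = -(a * b) - b * c := by
  rw [← sub_eq_zero, ← h.rel₁]; abel

theorem c_mul_b : c * b = -(b * a) - a * c := by
  rw [← sub_eq_zero, ← h.rel₂]; abel

theorem c_mul_a_mul (t : R) : c * (a * t) = -(a * (b * t)) - b * (c * t) := by
  rw [← mul_assoc, h.c_mul_a]; noncomm_ring

theorem c_mul_b_mul (t : R) : c * (b * t) = -(b * (a * t)) - a * (c * t) := by
  rw [← mul_assoc, h.c_mul_b]; noncomm_ring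

theorem b_mul_a_mul_b : b * (a * b) = a * (b * a) := by
  have b_mul_a : b * a = -(a * c) - c * b := by rw [← sub_eq_zero, ← h.rel₂]; abel
  calc b * (a * b) = -(a * (c * b)) - c * (b * b) := by rw [← mul_assoc, b_mul_a]; noncomm_ring
    _ = a * (b * a) := by
      rw [h.c_mul_b, h.b_mul_b, mul_sub, h.a_mul_a_mul]; noncomm_ring

theorem b_mul_a_mul_b_mul (t : R) : b * (a * (b * t)) = a * (b * (a * t)) := by
  simp only [← mul_assoc, h.b_mul_a_mul_b]

theorem mul_fkMonomial_mem_span {K : Type*} [Ring K] [Module K R] :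
    ∀ x ∈ ({a, b, c} : Set R), ∀ i,
      x * fkMonomial a b c i ∈ Submodule.span K (Set.range (fkMonomial a b c)) := by
  have mem : ∀ i, fkMonomial a b c i ∈ Submodule.span K (Set.range (fkMonomial a b c)) :=
    fun i => Submodule.subset_span ⟨i, rfl⟩
  simp only [Set.forall_mem_insert, Set.mem_singleton_iff, forall_eq, Sum.forall, Prod.forall, Fin.forall_fin_two,
    fkMonomial, Fin.val_zero, Fin.val_one, pow_zero, pow_one, mul_one, one_mul, mul_assoc] at mem ⊢
  simp [h.a_mul_a, h.b_mul_b, h.c_mul_c, h.a_mul_a_mul, h.b_mul_b_mul, h.c_mul_a, h.c_mul_b,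
    h.c_mul_a_mul, h.c_mul_b_mul, h.b_mul_a_mul_b, h.b_mul_a_mul_b_mul, mul_sub, mem,
    Submodule.sub_mem_iff_left]

end IsFK3Triple

theorem Submodule.span_eq_top_of_mul_mem {R A : Type*} [CommSemiring R] [Semiring A]
    [Algebra R A] {s t : Set A} (hs : Algebra.adjoin R s = ⊤) (one_mem : (1 : A) ∈ span R t)
    (mul_mem : ∀ x ∈ s, ∀ y ∈ t, x * y ∈ span R t) : span R t = ⊤ := by
  have mul_span_mem : ∀ z ∈ Algebra.adjoin R s, ∀ y ∈ span R t, z * y ∈ span R t := by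
    intro z hz
    induction hz using Algebra.adjoin_induction with
    | mem x hx =>
      have : t ⊆ (span R t).comap (LinearMap.mulLeft R x) := mul_mem x hx
      exact fun _ hy => span_le.mpr this hy
    | algebraMap r => intro y hy; simpa [← Algebra.smul_def] using smul_mem _ r hy
    | add x y _ _ hx hy => intro z hz; simpa [add_mul] using add_mem (hx z hz) (hy z hz)
    | mul x y _ _ hx hy => intro z hz; simpa [mul_assoc] using hx _ (hy z hz)
  refine eq_top_iff.mpr fun z _ => ?_
  simpa using mul_span_mem z (hs ▸ Algebra.mem_top) 1 one_mem

namespace FK3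

variable (k : Type*) [Field k]

theorem isFK3Triple_fkx : IsFK3Triple (fkx k 0) (fkx k 1) (fkx k 2) := by
  have rel {x : FreeAlgebra k (Fin 3)} (h : FKRel k x 0) : RingQuot.mkAlgHom k (FKRel k) x = 0 :=
    (RingQuot.mkAlgHom_rel k h).trans (map_zero _)
  constructor <;> simp only [fkx, ← map_mul, ← map_add] <;> exact rel (by constructor)

theorem adjoin_range_fkx : Algebra.adjoin k (Set.range (fkx k)) = ⊤ := by
  rw [show fkx k = RingQuot.mkAlgHom k (FKRel k) ∘ FreeAlgebra.ι k from rfl, Set.range_comp,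
    ← AlgHom.map_adjoin, FreeAlgebra.adjoin_range_ι, Algebra.map_top, AlgHom.range_eq_top]
  exact RingQuot.mkAlgHom_surjective k (FKRel k)

theorem span_fkMonomial_eq_top :
    Submodule.span k (Set.range (fkMonomial (fkx k 0) (fkx k 1) (fkx k 2))) = ⊤ := by
  refine Submodule.span_eq_top_of_mul_mem (adjoin_range_fkx k)
    (Submodule.subset_span ⟨.inl (0, 0, 0), by simp [fkMonomial]⟩) ?_
  rintro _ ⟨g, rfl⟩ _ ⟨i, rfl⟩
  exact (isFK3Triple_fkx k).mul_fkMonomial_mem_span _ (by fin_cases g <;> simp) i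

variable {k} in
def lift {A : Type*} [Ring A] [Algebra k A] (x : Fin 3 → A)
    (hx : IsFK3Triple (x 0) (x 1) (x 2)) : FK3 k →ₐ[k] A :=
  RingQuot.liftAlgHom k ⟨FreeAlgebra.lift k x, fun _ _ h => by
    cases h with
    | sq i => fin_cases i <;> simp [hx.a_mul_a, hx.b_mul_b, hx.c_mul_c]
    | r1 => simpa using hx.rel₁
    | r2 => simpa using hx.rel₂⟩

theorem lift_fkx {A : Type*} [Ring A] [Algebra k A] (x : Fin 3 → A)
    (hx : IsFK3Triple (x 0) (x 1) (x 2)) (i : Fin 3) : lift x hx (fkx k i) = x i := by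
  simp [lift, fkx]

/-- Left multiplication by `x₁, x₂, x₃` on the ordered basis `1, x₁, x₂, x₃, x₁x₂, x₁x₃, x₂x₃,
x₁x₂x₃, x₂x₁, x₂x₁x₃, x₁x₂x₁, x₁x₂x₁x₃`; `Matrix.single i j 1` records that basis vector `j` is
sent to basis vector `i`. -/
def leftMulMatrix : Fin 3 → Matrix (Fin 12) (Fin 12) ℤ := ![
  .single 1 0 1 + .single 4 2 1 + .single 5 3 1 + .single 7 6 1 + .single 10 8 1 +
    .single 11 9 1,
  .single 2 0 1 + .single 8 1 1 + .single 6 3 1 + .single 10 4 1 + .single 9 5 1 +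
    .single 11 7 1,
  .single 3 0 1 - .single 4 1 1 - .single 6 1 1 - .single 5 2 1 - .single 8 2 1 -
    .single 7 5 1 + .single 7 8 1 + .single 9 4 1 - .single 9 6 1 - .single 11 10 1]

theorem isFK3Triple_leftMulMatrix :
    IsFK3Triple (leftMulMatrix 0) (leftMulMatrix 1) (leftMulMatrix 2) := by
  constructor <;> decide

def fkMonomialIndex : (Fin 2 × Fin 2 × Fin 2) ⊕ (Fin 2 × Fin 2) → Fin 12
  | .inl (0, 0, 0) => 0
  | .inl (1, 0, 0) => 1
  | .inl (0, 1, 0) => 2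
  | .inl (0, 0, 1) => 3
  | .inl (1, 1, 0) => 4
  | .inl (1, 0, 1) => 5
  | .inl (0, 1, 1) => 6
  | .inl (1, 1, 1) => 7
  | .inr (0, 0) => 8
  | .inr (0, 1) => 9
  | .inr (1, 0) => 10
  | .inr (1, 1) => 11

theorem fkMonomialIndex_injective : Function.Injective fkMonomialIndex := by decide

theorem fkMonomial_leftMulMatrix_col_zero (i : (Fin 2 × Fin 2 × Fin 2) ⊕ (Fin 2 × Fin 2)) :
    (fkMonomial (leftMulMatrix 0) (leftMulMatrix 1) (leftMulMatrix 2) i).col 0 =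
      Pi.single (fkMonomialIndex i) 1 := by
  revert i; decide

def regularRep : FK3 k →ₐ[k] Matrix (Fin 12) (Fin 12) k :=
  lift (fun i => (leftMulMatrix i).map Int.cast)
    (isFK3Triple_leftMulMatrix.map (Int.castRingHom k).mapMatrix)

theorem regularRep_fkx (i : Fin 3) : regularRep k (fkx k i) = (leftMulMatrix i).map Int.cast :=
  lift_fkx k _ _ i

theorem regularRep_fkMonomial (i : (Fin 2 × Fin 2 × Fin 2) ⊕ (Fin 2 × Fin 2)) :
    regularRep k (fkMonomial (fkx k 0) (fkx k 1) (fkx k 2) i) =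
      (Int.castRingHom k).mapMatrix
        (fkMonomial (leftMulMatrix 0) (leftMulMatrix 1) (leftMulMatrix 2) i) := by
  simp only [map_fkMonomial, regularRep_fkx, RingHom.mapMatrix_apply, Int.coe_castRingHom]

theorem linearIndependent_fkMonomial :
    LinearIndependent k (fkMonomial (fkx k 0) (fkx k 1) (fkx k 2)) := by
  let firstCol : FK3 k →ₗ[k] Fin 12 → k :=
    (Matrix.mulVecBilin k k).flip (Pi.single 0 1) ∘ₗ (regularRep k).toLinearMap
  have firstCol_fkMonomial : firstCol ∘ fkMonomial (fkx k 0) (fkx k 1) (fkx k 2) =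
      Pi.basisFun k (Fin 12) ∘ fkMonomialIndex := by
    ext i j
    simp only [firstCol, Function.comp_apply, LinearMap.comp_apply, AlgHom.toLinearMap_apply,
      LinearMap.flip_apply, Matrix.mulVecBilin_apply, regularRep_fkMonomial,
      Matrix.mulVec_single_one, RingHom.mapMatrix_apply, Matrix.col_map, fkMonomial_leftMulMatrix_col_zero]
    simp [Pi.single_apply, apply_ite]
  refine LinearIndependent.of_comp firstCol ?_
  rw [firstCol_fkMonomial]
  exact (Pi.basisFun k (Fin 12)).linearIndependent.comp _ fkMonomialIndex_injective

end FK3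

theorem FK3_dim_and_basis_general (k : Type*) [Field k] :
    Module.finrank k (FK3 k) = 12 ∧
    ∃ b : Module.Basis ((Fin 2 × Fin 2 × Fin 2) ⊕ (Fin 2 × Fin 2)) k (FK3 k),
      (∀ p : Fin 2 × Fin 2 × Fin 2,
          b (Sum.inl p)
            = fkx k 0 ^ (p.1 : ℕ) * fkx k 1 ^ (p.2.1 : ℕ) * fkx k 2 ^ (p.2.2 : ℕ)) ∧
      (∀ p : Fin 2 × Fin 2,
          b (Sum.inr p)
            = fkx k 0 ^ (p.1 : ℕ) * (fkx k 1 * fkx k 0) * fkx k 2 ^ (p.2 : ℕ)) := by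
  let b := Module.Basis.mk (FK3.linearIndependent_fkMonomial k) (FK3.span_fkMonomial_eq_top k).ge
  refine ⟨?_, b, fun p => Module.Basis.mk_apply .., fun p => Module.Basis.mk_apply ..⟩
  simp [Module.finrank_eq_card_basis b]

/-- `dim_k FK₃ = 12`, with basis the monomials
`x₁^{n₁} x₂^{n₂} x₃^{n₃}` (`n_i ∈ {0,1}`) and `x₁^{n₁} (x₂x₁) x₃^{n₃}`
(`n₁, n₃ ∈ {0,1}`). -/
theorem FK3_dim_and_basis (k : Type*) [Field k] [CharZero k] :
    Module.finrank k (FK3 k) = 12 ∧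
    ∃ b : Module.Basis ((Fin 2 × Fin 2 × Fin 2) ⊕ (Fin 2 × Fin 2)) k (FK3 k),
      (∀ p : Fin 2 × Fin 2 × Fin 2,
          b (Sum.inl p)
            = fkx k 0 ^ (p.1 : ℕ) * fkx k 1 ^ (p.2.1 : ℕ) * fkx k 2 ^ (p.2.2 : ℕ)) ∧
      (∀ p : Fin 2 × Fin 2,
          b (Sum.inr p)
            = fkx k 0 ^ (p.1 : ℕ) * (fkx k 1 * fkx k 0) * fkx k 2 ^ (p.2 : ℕ)) :=
  FK3_dim_and_basis_general k
end

section
/- Let ω ∈ k be a primitive third root of unity and q₁, q₂ ∈ k^× with q₁q₂ = −ω. In the 5-dimensional braided vector space HV₁ with basis x₁,x₂,x₃,x₄ and braiding c(x_i⊗x_j) = −x_{2i−j}⊗x_i, c(x_i⊗x₄) = q₁ x₄⊗x_i, c(x₄⊗x_i) = q₂ x_i⊗x₄ (i,j ∈ {1,2,3}), c(x₄⊗x₄) = −ω² x₄⊗x₄, the map c satisfies the braid equation. -/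
/-- The rack underlying HV₁: basis `x₁, x₂, x₃` indexed by `some i`, `i : ZMod 3`
(with `i ▷ j = 2i − j`), and `x₄` indexed by `none` (a fixed point). -/
def hvOp : Option (ZMod 3) → Option (ZMod 3) → Option (ZMod 3)
  | some i, some j => some (2 * i - j)
  | some _, none => none
  | none, b => b

/-- The cocycle of HV₁: `c(x_i⊗x_j) = −x_{2i−j}⊗x_i`, `c(x_i⊗x₄) = q₁ x₄⊗x_i`,
`c(x₄⊗x_i) = q₂ x_i⊗x₄`, `c(x₄⊗x₄) = −ω² x₄⊗x₄`. -/
def hvCoef (k : Type*) [Field k] (ω q1 q2 : k) :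
    Option (ZMod 3) → Option (ZMod 3) → k
  | some _, some _ => -1
  | some _, none => q1
  | none, some _ => q2
  | none, none => -ω ^ 2

lemma braidOuter_single_s6 {k : Type*} [Field k] {X : Type*}
    (q : X → X → k) (op : X → X → X) (t : X × X × X) (r : k) :
    braidOuter k q op (Finsupp.single t r)
      = (r * q t.1 t.2.1) • Finsupp.single (op t.1 t.2.1, t.1, t.2.2) (1 : k) := by
  simp [braidOuter]

lemma braidInner_single_s6 {k : Type*} [Field k] {X : Type*}
    (q : X → X → k) (op : X → X → X) (t : X × X × X) (r : k) :
    braidInner k q op (Finsupp.single t r)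
      = (r * q t.2.1 t.2.2) • Finsupp.single (t.1, op t.2.1 t.2.2, t.2.1) (1 : k) := by
  simp [braidInner]

/-- On a basis vector `x ⊗ y ⊗ z` both sides send it to a multiple of
`(x ▷ y) ▷ (x ▷ z) ⊗ x ▷ y ⊗ x`: the vectors agree by self-distributivity, the
coefficients `q x y q x z q (x ▷ y) (x ▷ z)` and `q y z q x (y ▷ z) q x y` by the
cocycle condition. -/
theorem braid_equation_of_cocycle {k : Type*} [Field k] {X : Type*}
    (q : X → X → k) (op : X → X → X)
    (self_distrib : ∀ x y z, op x (op y z) = op (op x y) (op x z))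
    (cocycle : ∀ x y z, q x (op y z) * q y z = q (op x y) (op x z) * q x z) :
    braidOuter k q op ∘ₗ braidInner k q op ∘ₗ braidOuter k q op
      = braidInner k q op ∘ₗ braidOuter k q op ∘ₗ braidInner k q op := by
  refine Finsupp.lhom_ext fun ⟨x, y, z⟩ r => ?_
  simp only [LinearMap.comp_apply, braidOuter_single_s6, braidInner_single_s6, map_smul,
    smul_smul, self_distrib x y z]
  congr 1
  linear_combination -(r * q x y) * cocycle x y z

lemma hvOp_self_distrib (x y z : Option (ZMod 3)) :
    hvOp x (hvOp y z) = hvOp (hvOp x y) (hvOp x z) := by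
  rcases x with _ | i <;> rcases y with _ | j <;> rcases z with _ | l <;>
    simp only [hvOp, Option.some.injEq]
  ring

/-- `hvCoef` only sees whether each argument is `x₄`, and `x ▷ y` is `x₄` exactly
when `y` is, so the condition reduces to commutativity of `k`. -/
lemma hvCoef_cocycle {k : Type*} [Field k] (ω q1 q2 : k) (x y z : Option (ZMod 3)) :
    hvCoef k ω q1 q2 x (hvOp y z) * hvCoef k ω q1 q2 y z
      = hvCoef k ω q1 q2 (hvOp x y) (hvOp x z) * hvCoef k ω q1 q2 x z := by
  rcases x with _ | i <;> rcases y with _ | j <;> rcases z with _ | l <;>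
    simp only [hvOp, hvCoef] <;> ring

theorem HV1_braid_equation_general {k : Type*} [Field k] (ω q1 q2 : k) :
    (braidOuter k (hvCoef k ω q1 q2) hvOp)
        ∘ₗ (braidInner k (hvCoef k ω q1 q2) hvOp)
        ∘ₗ (braidOuter k (hvCoef k ω q1 q2) hvOp)
      = (braidInner k (hvCoef k ω q1 q2) hvOp)
        ∘ₗ (braidOuter k (hvCoef k ω q1 q2) hvOp)
        ∘ₗ (braidInner k (hvCoef k ω q1 q2) hvOp) :=
  braid_equation_of_cocycle _ _ hvOp_self_distrib (hvCoef_cocycle ω q1 q2)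

/-- the 5-dimensional braided vector space HV₁ (with ω a primitive
third root of unity and `q₁q₂ = −ω`) satisfies the braid equation. -/
theorem HV1_braid_equation {k : Type*} [Field k] (ω q1 q2 : k)
    (hω : ω ^ 3 = 1) (hω1 : ω ≠ 1) (hq : q1 * q2 = -ω) :
    (braidOuter k (hvCoef k ω q1 q2) hvOp)
        ∘ₗ (braidInner k (hvCoef k ω q1 q2) hvOp)
        ∘ₗ (braidOuter k (hvCoef k ω q1 q2) hvOp)
      = (braidInner k (hvCoef k ω q1 q2) hvOp)
        ∘ₗ (braidOuter k (hvCoef k ω q1 q2) hvOp)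
        ∘ₗ (braidInner k (hvCoef k ω q1 q2) hvOp) :=
  HV1_braid_equation_general ω q1 q2
end

section
/- In T(HV₁), the element r_h := x₄ z_h − q₂ z_h x₄ is primitive for each h ∈ {1,2,3}: Δ(r_h) = r_h ⊗ 1 + 1 ⊗ r_h. -/
/-!
Writing `u ↦ u ⊗ 1 + 1 ⊗ u` for primitive elements, the coproduct of a `q`-commutator
`[u, v]_q = u v - q v u` is `[u, v]_q ⊗ 1 + 1 ⊗ [u, v]_q` plus two cross terms whose coefficients
come from the braiding. For `z_h = [x_h, x₄]_{q₁}` only the cross term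
`(1 - q₁ q₂) x_h ⊗ x₄ = -ω² x_h ⊗ x₄` survives. For `r_h = [x₄, z_h]_{q₂}` the cross term
`x₄ ⊗ z_h` has coefficient `1 - ω³ = 0`, while `q₂ ω z_h ⊗ x₄` cancels against the contribution
of `-ω² x_h ⊗ x₄`, by `1 + ω + ω² = 0` and `q₁ q₂ = -ω`.
-/

open FreeAlgebra

/-- `z_h = x_h x₄ − q₁ x₄ x_h` in the tensor algebra `T(HV₁)`, realized as the
free algebra on generators `x_i = ι (some i)` (`i : ZMod 3`) and `x₄ = ι none`. -/
def zT (k : Type*) [Field k] (q1 : k) (h : ZMod 3) :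
    FreeAlgebra k (Option (ZMod 3)) :=
  ι k (some h) * ι k none - q1 • (ι k (none : Option (ZMod 3)) * ι k (some h))

section QCommutator

variable {k B : Type*} [CommRing k] [Ring B] [Algebra k B]

def qCommutator (q : k) (a b : B) : B := a * b - q • (b * a)

def SkewCommute (p : k) (a b : B) : Prop := a * b = p • (b * a)

theorem map_qCommutator {C : Type*} [Ring C] [Algebra k C] (f : B →ₐ[k] C) (q : k) (a b : B) :
    f (qCommutator q a b) = qCommutator q (f a) (f b) := by
  simp only [qCommutator, map_sub, map_mul, map_smul]

variable {p p' q : k} {a b c : B}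

theorem qCommutator_add_right (q : k) (a b c : B) :
    qCommutator q a (b + c) = qCommutator q a b + qCommutator q a c := by
  simp only [qCommutator, mul_add, add_mul, smul_add]
  abel

theorem qCommutator_smul_right (q s : k) (a b : B) :
    qCommutator q a (s • b) = s • qCommutator q a b := by
  simp only [qCommutator, mul_smul_comm, smul_mul_assoc, smul_sub, smul_comm q s]

namespace SkewCommute

theorem self (a : B) : SkewCommute (1 : k) a a := by
  rw [SkewCommute, one_smul]

theorem mul_right (h₁ : SkewCommute p a b) (h₂ : SkewCommute p' a c) :
    SkewCommute (p * p') a (b * c) := by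
  unfold SkewCommute at *
  rw [← mul_assoc, h₁, smul_mul_assoc, mul_assoc, h₂, mul_smul_comm, smul_smul, mul_assoc]

theorem mul_left (h₁ : SkewCommute p a c) (h₂ : SkewCommute p' b c) :
    SkewCommute (p * p') (a * b) c := by
  unfold SkewCommute at *
  rw [mul_assoc, h₂, mul_smul_comm, ← mul_assoc, h₁, smul_mul_assoc, smul_smul, mul_comm p',
    mul_assoc]

theorem qCommutator_right (h₁ : SkewCommute p a b) (h₂ : SkewCommute p' a c) :
    SkewCommute (p * p') a (qCommutator q b c) := by
  have hbc := h₁.mul_right h₂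
  have hcb := h₂.mul_right h₁
  unfold SkewCommute qCommutator at *
  rw [mul_sub, mul_smul_comm, hbc, hcb, mul_comm p', sub_mul, smul_mul_assoc, smul_sub,
    smul_comm q]

theorem qCommutator_left (h₁ : SkewCommute p a c) (h₂ : SkewCommute p' b c) :
    SkewCommute (p * p') (qCommutator q a b) c := by
  have hab := h₁.mul_left h₂
  have hba := h₂.mul_left h₁
  unfold SkewCommute qCommutator at *
  rw [sub_mul, smul_mul_assoc, hab, hba, mul_comm p', mul_sub, mul_smul_comm, smul_sub,
    smul_comm q]

end SkewCommute

/-- With `a = u ⊗ 1`, `A = 1 ⊗ u`, `b = v ⊗ 1`, `B' = 1 ⊗ v` in a braided tensor square, this is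
the coproduct of `[u, v]_q` for primitive `u, v`; the last two summands are the cross terms. -/
theorem qCommutator_add_add {A B' : B} (hAb : SkewCommute p A b) (hBa : SkewCommute p' B' a) :
    qCommutator q (a + A) (b + B') = qCommutator q a b + qCommutator q A B'
      + (1 - q * p') • (a * B') + (p - q) • (b * A) := by
  unfold SkewCommute qCommutator at *
  simp only [add_mul, mul_add, hAb, hBa, smul_add, smul_smul, sub_smul, one_smul]
  abel

end QCommutator

section HV1

variable {k B : Type*} [CommRing k] [Ring B] [Algebra k B] {ω q1 q2 : k} {x X y Y : B}

theorem rh_cross_terms_cancel (hω : ω ^ 2 + ω + 1 = 0) (hq : q1 * q2 = -ω)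
    (hYx : SkewCommute q1 Y x) (hXy : SkewCommute q2 X y) (hXx : SkewCommute (-ω ^ 2) X x) :
    qCommutator q2 (x + X) (qCommutator q1 y x + qCommutator q1 Y X + (-ω ^ 2) • (y * X))
      = qCommutator q2 x (qCommutator q1 y x) + qCommutator q2 X (qCommutator q1 Y X) := by
  have hxW : 1 - q2 * (q1 * -ω ^ 2) = 0 := by linear_combination ω ^ 2 * hq - (ω - 1) * hω
  have hcross : qCommutator q2 (x + X) (y * X) = x * y * X + (q2 * ω ^ 2) • (y * x * X) := by
    have hXyX : X * (y * X) = (q2 * 1) • (y * X * X) := hXy.mul_right (SkewCommute.self X)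
    unfold qCommutator
    rw [add_mul, mul_add, hXyX, mul_assoc y X x, hXx, mul_smul_comm]
    simp only [mul_one, smul_add, smul_smul, mul_assoc]
    module
  rw [qCommutator_add_right, qCommutator_smul_right,
    qCommutator_add_add (hXy.qCommutator_right hXx) (hYx.qCommutator_left hXx), hxW, zero_smul,
    add_zero, hcross, add_assoc, add_eq_left, qCommutator]
  simp only [sub_mul, smul_mul_assoc, mul_assoc, smul_add, smul_sub, smul_smul]
  match_scalars
  · linear_combination -q2 * (ω ^ 2 - ω + 1) * hω
  · linear_combination (ω ^ 2 + 1) * hq - ω * hω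

end HV1

theorem rh_primitive_general {k : Type*} [Field k] (ω q1 q2 : k)
    (hω : ω ^ 3 = 1) (hω1 : ω ≠ 1) (hq : q1 * q2 = -ω)
    {B : Type*} [Ring B] [Algebra k B]
    (l r : FreeAlgebra k (Option (ZMod 3)) →ₐ[k] B)
    (hc2 : ∀ i : ZMod 3, r (ι k (some i)) * l (ι k (none : Option (ZMod 3)))
        = q1 • (l (ι k (none : Option (ZMod 3))) * r (ι k (some i))))
    (hc3 : ∀ i : ZMod 3, r (ι k (none : Option (ZMod 3))) * l (ι k (some i))
        = q2 • (l (ι k (some i)) * r (ι k (none : Option (ZMod 3)))))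
    (hc4 : r (ι k (none : Option (ZMod 3))) * l (ι k (none : Option (ZMod 3)))
        = (-ω ^ 2) • (l (ι k (none : Option (ZMod 3))) * r (ι k (none : Option (ZMod 3)))))
    (Δ : FreeAlgebra k (Option (ZMod 3)) →ₐ[k] B)
    (hΔ : ∀ i : Option (ZMod 3), Δ (ι k i) = l (ι k i) + r (ι k i)) :
    ∀ h : ZMod 3,
      Δ (ι k (none : Option (ZMod 3)) * zT k q1 h - q2 • (zT k q1 h * ι k (none : Option (ZMod 3))))
        = l (ι k (none : Option (ZMod 3)) * zT k q1 h - q2 • (zT k q1 h * ι k (none : Option (ZMod 3))))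
          + r (ι k (none : Option (ZMod 3)) * zT k q1 h - q2 • (zT k q1 h * ι k (none : Option (ZMod 3)))) := by
  intro h
  have hω' : ω ^ 2 + ω + 1 = 0 := by
    have : (ω - 1) * (ω ^ 2 + ω + 1) = 0 := by linear_combination hω
    exact (mul_eq_zero.mp this).resolve_left (sub_ne_zero.mpr hω1)
  have hz : zT k q1 h = qCommutator q1 (ι k (some h)) (ι k none) := rfl
  have hΔz : Δ (zT k q1 h) = l (zT k q1 h) + r (zT k q1 h)
      + (-ω ^ 2) • (l (ι k (some h)) * r (ι k none)) := by
    rw [hz, map_qCommutator, hΔ, hΔ, qCommutator_add_add (hc2 h) (hc3 h), sub_self, zero_smul,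
      add_zero, map_qCommutator, map_qCommutator]
    congr 2
    linear_combination hω' - hq
  change Δ (qCommutator q2 _ _) = l (qCommutator q2 _ _) + r (qCommutator q2 _ _)
  rw [map_qCommutator, hΔz, hΔ, map_qCommutator, map_qCommutator, hz, map_qCommutator,
    map_qCommutator]
  exact rh_cross_terms_cancel hω' hq (hc2 h) (hc3 h) hc4

/-- in `T(HV₁)`, the element `r_h = x₄ z_h − q₂ z_h x₄` is
primitive: `Δ(r_h) = r_h ⊗ 1 + 1 ⊗ r_h` for `h ∈ {1,2,3}`.  The braided tensor
square is modelled as in Statement 17. -/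
theorem rh_primitive {k : Type*} [Field k] (ω q1 q2 : k)
    (hω : ω ^ 3 = 1) (hω1 : ω ≠ 1) (hq : q1 * q2 = -ω)
    {B : Type*} [Ring B] [Algebra k B]
    (l r : FreeAlgebra k (Option (ZMod 3)) →ₐ[k] B)
    (hc1 : ∀ i j : ZMod 3, r (ι k (some i)) * l (ι k (some j))
        = -(l (ι k (some (2 * i - j))) * r (ι k (some i))))
    (hc2 : ∀ i : ZMod 3, r (ι k (some i)) * l (ι k (none : Option (ZMod 3)))
        = q1 • (l (ι k (none : Option (ZMod 3))) * r (ι k (some i))))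
    (hc3 : ∀ i : ZMod 3, r (ι k (none : Option (ZMod 3))) * l (ι k (some i))
        = q2 • (l (ι k (some i)) * r (ι k (none : Option (ZMod 3)))))
    (hc4 : r (ι k (none : Option (ZMod 3))) * l (ι k (none : Option (ZMod 3)))
        = (-ω ^ 2) • (l (ι k (none : Option (ZMod 3))) * r (ι k (none : Option (ZMod 3)))))
    (Δ : FreeAlgebra k (Option (ZMod 3)) →ₐ[k] B)
    (hΔ : ∀ i : Option (ZMod 3), Δ (ι k i) = l (ι k i) + r (ι k i)) :
    ∀ h : ZMod 3,
      Δ (ι k (none : Option (ZMod 3)) * zT k q1 h - q2 • (zT k q1 h * ι k (none : Option (ZMod 3))))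
        = l (ι k (none : Option (ZMod 3)) * zT k q1 h - q2 • (zT k q1 h * ι k (none : Option (ZMod 3))))
          + r (ι k (none : Option (ZMod 3)) * zT k q1 h - q2 • (zT k q1 h * ι k (none : Option (ZMod 3)))) :=
  rh_primitive_general ω q1 q2 hω hω1 hq l r hc2 hc3 hc4 Δ hΔ
end
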